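/- Let T > 0, let f ∈ L¹(0,T), let g ∈ L∞(0,T) with g ≥ 0 a.e. in (0,T), and let g₀ ∈ ℝ (playing the role of the initial value g(0)). Then the following two assertions are equivalent: (i) for every continuously differentiable function φ : [0,T] → ℝ with φ ≥ 0 and φ' ≤ 0 on [0,T] and φ(T) = 0, one has −∫₀ᵀ φ'(t) g(t) dt − φ(0) g₀ + ∫₀ᵀ φ(t) f(t) dt ≤ 0; (ii) g(t) − g₀ + ∫₀ᵗ f(s) ds ≤ 0 for almost every t ∈ (0,T). -/

import Mathlib

open Set MeasureTheory Filter Topology Metric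

/-!
Integrating by parts and applying Fubini, the left-hand side of (i) equals `-∫₀ᵀ φ' h` with
`h t = g t - g₀ + ∫₀ᵗ f`; since `φ' ≤ 0`, (ii) gives (i). Conversely, the test function
`φ t = ∫ₜᵀ ψ` turns (i) into `∫₀ᵀ ψ h ≤ 0` for every continuous `ψ ≥ 0`. Letting `ψ` decrease to
the indicator of a closed ball (dominated convergence) bounds the integral of `h` over every ball,
and the Lebesgue differentiation theorem then gives `h ≤ 0` almost everywhere.
-/

theorem setIntegral_nonpos_of_forall_continuous_integral_mul_nonpos {α : Type*}
    [PseudoMetricSpace α] [MeasurableSpace α] [OpensMeasurableSpace α] {μ : Measure α}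
    {h : α → ℝ} (hh : Integrable h μ)
    (H : ∀ ψ : α → ℝ, Continuous ψ → (∀ x, 0 ≤ ψ x) → ∫ x, ψ x * h x ∂μ ≤ 0)
    {s : Set α} (hs : IsClosed s) : ∫ x in s, h x ∂μ ≤ 0 := by
  have hδ : ∀ n : ℕ, (0 : ℝ) < 1 / (n + 1) := fun n => Nat.one_div_pos_of_nat
  set ψ : ℕ → α → ℝ := fun n x => thickenedIndicator (hδ n) s x
  have hψ : ∀ n, Continuous (ψ n) := fun n =>
    NNReal.continuous_coe.comp (thickenedIndicator (hδ n) s).continuous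
  have hψ_le : ∀ n x, ‖ψ n x‖ ≤ 1 := fun n x => by
    simpa [ψ] using thickenedIndicator_le_one (hδ n) s x
  have hlim : ∀ x, Tendsto (fun n => ψ n x * h x) atTop (𝓝 (s.indicator h x)) := by
    intro x
    have := tendsto_pi_nhds.1 (thickenedIndicator_tendsto_indicator_closure hδ
      tendsto_one_div_add_atTop_nhds_zero_nat s) x
    rw [hs.closure_eq] at this
    convert (NNReal.tendsto_coe.2 this).mul_const (h x) using 2
    by_cases hx : x ∈ s <;> simp [hx]
  have hDCT := tendsto_integral_of_dominated_convergence (F := fun n x => ψ n x * h x)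
    (fun x => ‖h x‖)
    (fun n => (hψ n).aestronglyMeasurable.mul hh.1) hh.norm
    (fun n => ae_of_all _ fun x => by
      rw [norm_mul]; exact mul_le_of_le_one_left (norm_nonneg _) (hψ_le n x))
    (ae_of_all _ hlim)
  rw [← integral_indicator hs.measurableSet]
  exact le_of_tendsto' hDCT fun n => H _ (hψ n) fun x => NNReal.coe_nonneg _

theorem ae_nonpos_of_forall_setIntegral_closedBall_nonpos {α : Type*} [PseudoMetricSpace α]
    [MeasurableSpace α] [SecondCountableTopology α] [BorelSpace α] {μ : Measure α}
    [IsUnifLocDoublingMeasure μ] [IsLocallyFiniteMeasure μ] {h : α → ℝ}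
    (hh : LocallyIntegrable h μ) (H : ∀ x (r : ℝ), 0 < r → ∫ y in closedBall x r, h y ∂μ ≤ 0) :
    ∀ᵐ x ∂μ, h x ≤ 0 := by
  filter_upwards [IsUnifLocDoublingMeasure.ae_tendsto_average μ hh 1] with x hx
  refine le_of_tendsto (hx (fun _ => x) id tendsto_id ?_) ?_
  · filter_upwards [self_mem_nhdsWithin] with r hr
    exact mem_closedBall_self (by simpa using le_of_lt hr)
  · filter_upwards [self_mem_nhdsWithin] with r hr
    rw [setAverage_eq, smul_eq_mul]
    exact mul_nonpos_of_nonneg_of_nonpos (inv_nonneg.2 ENNReal.toReal_nonneg) (H x r hr)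

theorem ae_restrict_nonpos_of_forall_continuous_integral_mul_nonpos {α : Type*}
    [PseudoMetricSpace α] [MeasurableSpace α] [SecondCountableTopology α] [BorelSpace α]
    {μ : Measure α} [IsUnifLocDoublingMeasure μ] [IsLocallyFiniteMeasure μ] {h : α → ℝ}
    {s : Set α} (hs : MeasurableSet s) (hh : IntegrableOn h s μ)
    (H : ∀ ψ : α → ℝ, Continuous ψ → (∀ x, 0 ≤ ψ x) → ∫ x in s, ψ x * h x ∂μ ≤ 0) :
    ∀ᵐ x ∂μ.restrict s, h x ≤ 0 := by
  have hind : ∀ᵐ x ∂μ, s.indicator h x ≤ 0 := by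
    refine ae_nonpos_of_forall_setIntegral_closedBall_nonpos
      (hh.integrable_indicator hs).locallyIntegrable fun x r _ => ?_
    rw [setIntegral_indicator hs, ← Measure.restrict_restrict measurableSet_closedBall]
    exact setIntegral_nonpos_of_forall_continuous_integral_mul_nonpos hh H isClosed_closedBall
  filter_upwards [ae_restrict_of_ae hind, ae_restrict_mem hs] with x hx hxs
  rwa [indicator_of_mem hxs] at hx

theorem setIntegral_Ioo_integral_Ioo_mul_swap {μ : Measure ℝ} [SFinite μ] {a b : ℝ}
    {f ψ : ℝ → ℝ} (hf : IntegrableOn f (Ioo a b) μ) (hψ : IntegrableOn ψ (Ioo a b) μ) :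
    ∫ s in Ioo a b, (∫ t in Ioo s b, ψ t ∂μ) * f s ∂μ
      = ∫ t in Ioo a b, ψ t * ∫ s in Ioo a t, f s ∂μ ∂μ := by
  set ν := μ.restrict (Ioo a b)
  set G : ℝ → ℝ → ℝ := fun s t => {p : ℝ × ℝ | p.1 < p.2}.indicator
    (fun p => f p.1 * ψ p.2) (s, t)
  have hG : Integrable (Function.uncurry G) (ν.prod ν) :=
    (hf.mul_prod hψ).indicator (measurableSet_lt measurable_fst measurable_snd)
  calc ∫ s in Ioo a b, (∫ t in Ioo s b, ψ t ∂μ) * f s ∂μ = ∫ s, ∫ t, G s t ∂ν ∂ν := by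
        refine setIntegral_congr_fun measurableSet_Ioo fun s hs => ?_
        have hGs : G s = (Ioi s).indicator fun t => f s * ψ t := by
          ext t; simp [G, indicator_apply]
        rw [hGs, setIntegral_indicator measurableSet_Ioi, Ioo_inter_Ioi, max_eq_right hs.1.le,
          integral_const_mul, mul_comm]
    _ = ∫ t, ∫ s, G s t ∂ν ∂ν := integral_integral_swap hG
    _ = ∫ t in Ioo a b, ψ t * ∫ s in Ioo a t, f s ∂μ ∂μ := by
        refine setIntegral_congr_fun measurableSet_Ioo fun t ht => ?_
        have hGt : (fun s => G s t) = (Iio t).indicator fun s => f s * ψ t := by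
          ext s; simp [G, indicator_apply]
        rw [hGt, setIntegral_indicator measurableSet_Iio, Ioo_inter_Iio, min_eq_right ht.2.le,
          integral_mul_const, mul_comm]

theorem integrableOn_Ioo_integral_Ioo {μ : Measure ℝ} [IsLocallyFiniteMeasure μ]
    [NullSingletonClass μ] {a b : ℝ} {f : ℝ → ℝ} (hf : IntegrableOn f (Ioo a b) μ) :
    IntegrableOn (fun t => ∫ s in Ioo a t, f s ∂μ) (Ioo a b) μ := by
  have hcont :=
    intervalIntegral.continuousOn_primitive ((integrableOn_Icc_iff_integrableOn_Ioo).2 hf)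
  simp_rw [integral_Ioc_eq_integral_Ioo] at hcont
  exact hcont.integrableOn_Icc.mono_set Ioo_subset_Icc_self

theorem integral_Ioo_deriv_eq_sub {φ : ℝ → ℝ} (hφ : ContDiff ℝ 1 φ) {a b : ℝ} (hab : a ≤ b) :
    ∫ t in Ioo a b, deriv φ t = φ b - φ a := by
  rw [← integral_Ioc_eq_integral_Ioo, ← intervalIntegral.integral_of_le hab]
  exact intervalIntegral.integral_deriv_eq_sub
    (fun x _ => (hφ.differentiable one_ne_zero).differentiableAt)
    ((hφ.continuous_deriv le_rfl).intervalIntegrable _ _)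

theorem weak_form_eq_neg_integral_deriv_mul {a b g₀ : ℝ} (hab : a ≤ b) {f g φ : ℝ → ℝ}
    (hf : IntegrableOn f (Ioo a b)) (hg : IntegrableOn g (Ioo a b)) (hφ : ContDiff ℝ 1 φ)
    (hφb : φ b = 0) :
    -(∫ t in Ioo a b, deriv φ t * g t) - φ a * g₀ + ∫ t in Ioo a b, φ t * f t
      = -∫ t in Ioo a b, deriv φ t * (g t - g₀ + ∫ s in Ioo a t, f s) := by
  have hψ : Continuous (deriv φ) := hφ.continuous_deriv le_rfl
  have hint : ∀ {u : ℝ → ℝ}, IntegrableOn u (Ioo a b) →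
      IntegrableOn (fun t => deriv φ t * u t) (Ioo a b) := fun hu =>
    hu.continuousOn_mul_of_subset hψ.continuousOn isCompact_Icc measurableSet_Ioo
      Ioo_subset_Icc_self
  have hconst : IntegrableOn (fun _ => g₀) (Ioo a b) := integrableOn_const measure_Ioo_lt_top.ne
  have hφf : ∫ t in Ioo a b, φ t * f t
      = -∫ t in Ioo a b, deriv φ t * ∫ s in Ioo a t, f s := by
    rw [← setIntegral_Ioo_integral_Ioo_mul_swap hf (hψ.integrableOn_Icc.mono_set
      Ioo_subset_Icc_self), ← integral_neg]
    refine setIntegral_congr_fun measurableSet_Ioo fun s hs => ?_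
    rw [integral_Ioo_deriv_eq_sub hφ hs.2.le, hφb]
    ring
  have hsplit : ∫ t in Ioo a b, deriv φ t * (g t - g₀ + ∫ s in Ioo a t, f s)
      = (∫ t in Ioo a b, deriv φ t * g t) - (∫ t in Ioo a b, deriv φ t) * g₀
        + ∫ t in Ioo a b, deriv φ t * ∫ s in Ioo a t, f s := by
    simp only [mul_add, mul_sub]
    have hsub : IntegrableOn (fun t => deriv φ t * g t - deriv φ t * g₀) (Ioo a b) :=
      (hint hg).sub (hint hconst)
    rw [integral_add hsub (hint (integrableOn_Ioo_integral_Ioo hf)),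
      integral_sub (hint hg) (hint hconst), integral_mul_const]
  rw [hsplit, hφf, integral_Ioo_deriv_eq_sub hφ hab, hφb]
  ring

theorem Continuous.hasDerivAt_intervalIntegral_left {ψ : ℝ → ℝ} (hψ : Continuous ψ) (b t : ℝ) :
    HasDerivAt (fun u => ∫ s in u..b, ψ s) (-ψ t) t :=
  intervalIntegral.integral_hasDerivAt_left (hψ.intervalIntegrable _ _)
    (hψ.stronglyMeasurableAtFilter _ _) hψ.continuousAt

theorem deriv_intervalIntegral_left {ψ : ℝ → ℝ} (hψ : Continuous ψ) (b : ℝ) :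
    deriv (fun u => ∫ s in u..b, ψ s) = -ψ :=
  funext fun t => (hψ.hasDerivAt_intervalIntegral_left b t).deriv

theorem contDiff_one_intervalIntegral_left {ψ : ℝ → ℝ} (hψ : Continuous ψ) (b : ℝ) :
    ContDiff ℝ 1 fun u => ∫ s in u..b, ψ s :=
  contDiff_one_iff_deriv.2 ⟨fun t => (hψ.hasDerivAt_intervalIntegral_left b t).differentiableAt,
    by rw [deriv_intervalIntegral_left hψ]; exact hψ.neg⟩

theorem weak_form_iff_ae_form_general
    (T : ℝ) (hT : 0 < T) (f g : ℝ → ℝ) (g₀ : ℝ)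
    (hf : IntegrableOn f (Ioo 0 T))
    (hg_meas : Measurable g)
    (hg_bdd : ∃ C : ℝ, ∀ᵐ t ∂(volume.restrict (Ioo 0 T)), |g t| ≤ C) :
    (∀ φ : ℝ → ℝ, ContDiff ℝ 1 φ →
        (∀ t ∈ Icc 0 T, 0 ≤ φ t) → (∀ t ∈ Icc 0 T, deriv φ t ≤ 0) → φ T = 0 →
        -(∫ t in Ioo 0 T, deriv φ t * g t) - φ 0 * g₀ + ∫ t in Ioo 0 T, φ t * f t ≤ 0)
      ↔
    (∀ᵐ t ∂(volume.restrict (Ioo 0 T)), g t - g₀ + ∫ s in Ioo 0 t, f s ≤ 0) := by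
  obtain ⟨C, hC⟩ := hg_bdd
  have hg : IntegrableOn g (Ioo 0 T) :=
    (integrable_const C).mono' hg_meas.aestronglyMeasurable (by simpa only [Real.norm_eq_abs])
  have hh : IntegrableOn (fun t => g t - g₀ + ∫ s in Ioo 0 t, f s) (Ioo 0 T) :=
    (hg.sub (integrableOn_const measure_Ioo_lt_top.ne)).add (integrableOn_Ioo_integral_Ioo hf)
  constructor
  · intro hweak
    refine ae_restrict_nonpos_of_forall_continuous_integral_mul_nonpos measurableSet_Ioo hh
      fun ψ hψ hψ0 => ?_
    have hφ := contDiff_one_intervalIntegral_left hψ T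
    have := hweak _ hφ (fun t ht => intervalIntegral.integral_nonneg ht.2 fun u _ => hψ0 u)
      (fun t _ => by simp [deriv_intervalIntegral_left hψ, hψ0]) intervalIntegral.integral_same
    rw [weak_form_eq_neg_integral_deriv_mul hT.le hf hg hφ intervalIntegral.integral_same,
      deriv_intervalIntegral_left hψ] at this
    simpa only [Pi.neg_apply, neg_mul, integral_neg, neg_neg] using this
  · intro hae φ hφ _ hφ' hφT
    rw [weak_form_eq_neg_integral_deriv_mul hT.le hf hg hφ hφT, neg_nonpos]
    refine integral_nonneg_of_ae ?_
    filter_upwards [hae, ae_restrict_mem measurableSet_Ioo] with t ht htI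
    exact mul_nonneg_of_nonpos_of_nonpos (hφ' t (Ioo_subset_Icc_self htI)) ht

/-- Lemma on the equivalence of the weak (test-function) form and the pointwise a.e.
form of the energy inequality: for `f ∈ L¹(0,T)`, `g ∈ L∞(0,T)` with `g ≥ 0` a.e. and
an initial value `g₀`, the inequality
`−∫₀ᵀ φ' g − φ(0) g₀ + ∫₀ᵀ φ f ≤ 0` for all `C¹` test functions `φ ≥ 0` with `φ' ≤ 0`
on `[0,T]` and `φ(T) = 0` is equivalent to
`g(t) − g₀ + ∫₀ᵗ f ≤ 0` for a.e. `t ∈ (0,T)`. -/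
theorem weak_form_iff_ae_form
    (T : ℝ) (hT : 0 < T) (f g : ℝ → ℝ) (g₀ : ℝ)
    (hf : IntegrableOn f (Ioo 0 T))
    (hg_meas : Measurable g)
    (hg_bdd : ∃ C : ℝ, ∀ᵐ t ∂(volume.restrict (Ioo 0 T)), |g t| ≤ C)
    (hg_nonneg : ∀ᵐ t ∂(volume.restrict (Ioo 0 T)), 0 ≤ g t) :
    (∀ φ : ℝ → ℝ, ContDiff ℝ 1 φ →
        (∀ t ∈ Icc 0 T, 0 ≤ φ t) → (∀ t ∈ Icc 0 T, deriv φ t ≤ 0) → φ T = 0 →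
        -(∫ t in Ioo 0 T, deriv φ t * g t) - φ 0 * g₀ + ∫ t in Ioo 0 T, φ t * f t ≤ 0)
      ↔
    (∀ᵐ t ∂(volume.restrict (Ioo 0 T)), g t - g₀ + ∫ s in Ioo 0 t, f s ≤ 0) :=
  weak_form_iff_ae_form_general T hT f g g₀ hf hg_meas hg_bdd
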